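/- The double cross coproduct A ⋈^{φ,ψ} H is a bialgebra: the map Δ_D is coassociative, i.e. (Δ_D ⊗ id_{A⊗H}) ∘ Δ_D = (id_{A⊗H} ⊗ Δ_D) ∘ Δ_D, has counit ε_A ⊗ ε_H, i.e. ((ε_A ⊗ ε_H) ⊗ id) ∘ Δ_D = id_{A⊗H} = (id ⊗ (ε_A ⊗ ε_H)) ∘ Δ_D, and Δ_D is an algebra morphism from the tensor-product algebra A ⊗ H to the tensor-product algebra (A ⊗ H) ⊗ (A ⊗ H): Δ_D(u·v) = Δ_D(u)·Δ_D(v) for all u, v ∈ A ⊗ H and Δ_D(1_A ⊗ 1_H) = (1_A ⊗ 1_H) ⊗ (1_A ⊗ 1_H). -/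

import Mathlib

/-!
The map `ξ`, `x ↦ p_A(x₁) ⊗ p_H(x₂)`, is an algebra map (as `Δ_X` is), and `Δ_D` is the
comultiplication of `X` transported along it: `Δ_D ∘ ξ = (ξ ⊗ ξ) ∘ Δ_X`. Since `ζ` is multiplicative,
`φ(a) ψ(h) = ζ(a ⊗ 1)ζ(1 ⊗ h) = ζ(a ⊗ h)`, so `Δ_D(a ⊗ h) = a₁ ⊗ ζ(a₂ ⊗ h₁) ⊗ h₂`; on `ξ(x)` the middle
factor is `ζ(ξ(x₂)) = p_H(x₂) ⊗ p_A(x₃)` and coassociativity of `Δ_X` gives the identity. As `ξ` is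
surjective, coassociativity, the counit laws and multiplicativity of `Δ_D` are inherited from `X`.
-/

open TensorProduct

noncomputable section

universe u

variable {k A H X : Type u} [Field k]
  [Ring A] [Ring H] [Ring X]
  [Bialgebra k A] [Bialgebra k H] [Bialgebra k X]

/-- ζ := (p_H ⊗ p_A) ∘ Δ_X ∘ ξ⁻¹ : A ⊗ H → H ⊗ A. -/
def zetaC (pA : X →ₐc[k] A) (pH : X →ₐc[k] H) (ξ : X ≃ₗ[k] A ⊗[k] H) :
    A ⊗[k] H →ₗ[k] H ⊗[k] A :=
  TensorProduct.map (pH : X →ₗ[k] H) (pA : X →ₗ[k] A) ∘ₗ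
    (Coalgebra.comul : X →ₗ[k] X ⊗[k] X) ∘ₗ ξ.symm.toLinearMap

/-- φ : A → H ⊗ A, φ(a) := ζ(a ⊗ 1_H). -/
def phiC (pA : X →ₐc[k] A) (pH : X →ₐc[k] H) (ξ : X ≃ₗ[k] A ⊗[k] H) :
    A →ₗ[k] H ⊗[k] A :=
  zetaC pA pH ξ ∘ₗ (TensorProduct.mk k A H).flip (1 : H)

/-- ψ : H → H ⊗ A, ψ(h) := ζ(1_A ⊗ h). -/
def psiC (pA : X →ₐc[k] A) (pH : X →ₐc[k] H) (ξ : X ≃ₗ[k] A ⊗[k] H) :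
    H →ₗ[k] H ⊗[k] A :=
  zetaC pA pH ξ ∘ₗ TensorProduct.mk k A H (1 : A)

/-- The double cross coproduct comultiplication Δ_D : A ⊗ H → (A ⊗ H) ⊗ (A ⊗ H),
Δ_D(a ⊗ h) = Σ (a₁ ⊗ a₂^{[-1]}·h₁^{[-1]}) ⊗ (a₂^{[0]}·h₁^{[0]} ⊗ h₂),
where φ(a₂) = Σ a₂^{[-1]} ⊗ a₂^{[0]} and ψ(h₁) = Σ h₁^{[-1]} ⊗ h₁^{[0]}. -/
def DeltaD (pA : X →ₐc[k] A) (pH : X →ₐc[k] H) (ξ : X ≃ₗ[k] A ⊗[k] H) :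
    A ⊗[k] H →ₗ[k] (A ⊗[k] H) ⊗[k] (A ⊗[k] H) :=
  (TensorProduct.assoc k A H (A ⊗[k] H)).symm.toLinearMap ∘ₗ
  TensorProduct.map LinearMap.id (TensorProduct.assoc k H A H).toLinearMap ∘ₗ
  TensorProduct.map LinearMap.id
    (TensorProduct.map
      (LinearMap.mul' k (H ⊗[k] A) ∘ₗ
        TensorProduct.map (phiC pA pH ξ) (psiC pA pH ξ))
      LinearMap.id) ∘ₗ
  TensorProduct.map LinearMap.id (TensorProduct.assoc k A H H).symm.toLinearMap ∘ₗ
  (TensorProduct.assoc k A A (H ⊗[k] H)).toLinearMap ∘ₗ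
  TensorProduct.map (Coalgebra.comul : A →ₗ[k] A ⊗[k] A)
    (Coalgebra.comul : H →ₗ[k] H ⊗[k] H)


open Coalgebra

section Transport

variable {R C V : Type*} [CommSemiring R] [AddCommMonoid C] [Module R C] [Coalgebra R C]
  [AddCommMonoid V] [Module R V] {e : C →ₗ[R] V} {δ : V →ₗ[R] V ⊗[R] V}

theorem coassoc_of_comp_eq_map_comp_comul (he : Function.Surjective e)
    (hδ : δ ∘ₗ e = map e e ∘ₗ comul) :
    (TensorProduct.assoc R V V V).toLinearMap ∘ₗ map δ LinearMap.id ∘ₗ δ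
      = map LinearMap.id δ ∘ₗ δ := by
  rw [← LinearMap.cancel_right he]
  simp only [coassoc_simps, hδ]

theorem lid_comp_map_comp_eq_id_of_comp_eq_map_comp_comul (he : Function.Surjective e)
    (hδ : δ ∘ₗ e = map e e ∘ₗ comul) {c : V →ₗ[R] R} (hc : c ∘ₗ e = counit) :
    (TensorProduct.lid R V).toLinearMap ∘ₗ map c LinearMap.id ∘ₗ δ = LinearMap.id := by
  rw [← LinearMap.cancel_right he]
  simp only [coassoc_simps, hδ, hc, CoassocSimps.map_counit_comp_comul_left]

theorem rid_comp_map_comp_eq_id_of_comp_eq_map_comp_comul (he : Function.Surjective e)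
    (hδ : δ ∘ₗ e = map e e ∘ₗ comul) {c : V →ₗ[R] R} (hc : c ∘ₗ e = counit) :
    (TensorProduct.rid R V).toLinearMap ∘ₗ map LinearMap.id c ∘ₗ δ = LinearMap.id := by
  rw [← LinearMap.cancel_right he]
  simp only [coassoc_simps, hδ, hc, CoassocSimps.map_counit_comp_comul_right]

end Transport

section Multiplicative

variable {R B C D : Type*} [CommSemiring R] [Semiring B] [Semiring C] [Semiring D]
  [Algebra R B] [Algebra R C] [Algebra R D] {e : C →ₐ[R] B} {g : C →ₐ[R] D} {δ : B →ₗ[R] D}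

theorem map_mul_of_comp_eq_algHom (he : Function.Surjective e)
    (h : δ ∘ₗ e.toLinearMap = g.toLinearMap) (u v : B) : δ (u * v) = δ u * δ v := by
  obtain ⟨x, rfl⟩ := he u
  obtain ⟨y, rfl⟩ := he v
  have hδe (z : C) : δ (e z) = g z := LinearMap.congr_fun h z
  rw [← map_mul, hδe, hδe, hδe, map_mul]

theorem map_one_of_comp_eq_algHom (h : δ ∘ₗ e.toLinearMap = g.toLinearMap) : δ 1 = 1 := by
  rw [← map_one e, ← map_one g]
  exact LinearMap.congr_fun h 1

end Multiplicative

section TwistedComul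

variable {R C D E : Type*} [CommSemiring R] [AddCommMonoid C] [Module R C] [Coalgebra R C]
  [AddCommMonoid D] [Module R D] [Coalgebra R D] [AddCommMonoid E] [Module R E] [Coalgebra R E]

/-- `d ⊗ e ↦ d₁ ⊗ ζ(d₂ ⊗ e₁) ⊗ e₂`, reassociated as `(D ⊗ E) ⊗ (D ⊗ E)`. -/
def twistedComul (ζ : D ⊗[R] E →ₗ[R] E ⊗[R] D) : D ⊗[R] E →ₗ[R] (D ⊗[R] E) ⊗[R] (D ⊗[R] E) :=
  (TensorProduct.assoc R D E (D ⊗[R] E)).symm.toLinearMap ∘ₗ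
  map LinearMap.id (TensorProduct.assoc R E D E).toLinearMap ∘ₗ
  map LinearMap.id (map ζ LinearMap.id) ∘ₗ
  map LinearMap.id (TensorProduct.assoc R D E E).symm.toLinearMap ∘ₗ
  (TensorProduct.assoc R D D (E ⊗[R] E)).toLinearMap ∘ₗ
  map comul comul

theorem twistedComul_comp_map_comp_comul (f : C →ₗc[R] D) (g : C →ₗc[R] E)
    {ζ : D ⊗[R] E →ₗ[R] E ⊗[R] D}
    (hζ : ζ ∘ₗ map (f : C →ₗ[R] D) (g : C →ₗ[R] E) ∘ₗ comul
      = map (g : C →ₗ[R] E) (f : C →ₗ[R] D) ∘ₗ comul) :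
    twistedComul ζ ∘ₗ map (f : C →ₗ[R] D) (g : C →ₗ[R] E) ∘ₗ comul
      = map (map (f : C →ₗ[R] D) g ∘ₗ comul) (map (f : C →ₗ[R] D) g ∘ₗ comul) ∘ₗ comul := by
  simp only [twistedComul, coassoc_simps, ← CoalgHomClass.map_comp_comul, hζ]

theorem counit_comp_map_comp_comul (f : C →ₗc[R] D) (g : C →ₗc[R] E) :
    counit ∘ₗ map (f : C →ₗ[R] D) (g : C →ₗ[R] E) ∘ₗ comul = (counit : C →ₗ[R] R) := by
  rw [TensorProduct.counit_def]
  simp only [coassoc_simps, CoalgHomClass.counit_comp]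
  rw [CoassocSimps.map_counit_comp_comul_right]
  ext
  simp

end TwistedComul

section MapComul

variable {R C D E : Type*} [CommSemiring R] [Semiring C] [Semiring D] [Semiring E]
  [Bialgebra R C] [Algebra R D] [Algebra R E]

def mapComulAlgHom (f : C →ₐ[R] D) (g : C →ₐ[R] E) : C →ₐ[R] D ⊗[R] E :=
  (Algebra.TensorProduct.map f g).comp (Bialgebra.comulAlgHom R C)

theorem toLinearMap_mapComulAlgHom (f : C →ₐ[R] D) (g : C →ₐ[R] E) :
    (mapComulAlgHom f g).toLinearMap = map f.toLinearMap g.toLinearMap ∘ₗ comul := by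
  rw [mapComulAlgHom, AlgHom.comp_toLinearMap, Algebra.TensorProduct.toLinearMap_map,
    AlgebraTensorModule.map_eq]
  rfl

end MapComul

section DoubleCross

variable {pA : X →ₐc[k] A} {pH : X →ₐc[k] H} {ξ : X ≃ₗ[k] A ⊗[k] H}

theorem zetaC_comp_map_comp_comul
    (hξ : ξ.toLinearMap = map (pA : X →ₗ[k] A) (pH : X →ₗ[k] H) ∘ₗ comul) :
    zetaC pA pH ξ ∘ₗ map (pA : X →ₗ[k] A) (pH : X →ₗ[k] H) ∘ₗ comul
      = map (pH : X →ₗ[k] H) (pA : X →ₗ[k] A) ∘ₗ comul := by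
  simp [zetaC, ← hξ, LinearMap.comp_assoc]

theorem mapComulAlgHom_surjective
    (hξ : ξ.toLinearMap = map (pA : X →ₗ[k] A) (pH : X →ₗ[k] H) ∘ₗ comul) :
    Function.Surjective (mapComulAlgHom (pA : X →ₐ[k] A) (pH : X →ₐ[k] H)) := by
  intro u
  obtain ⟨x, rfl⟩ := ξ.surjective u
  refine ⟨x, ?_⟩
  rw [← LinearEquiv.coe_coe, hξ]
  exact LinearMap.congr_fun (toLinearMap_mapComulAlgHom (pA : X →ₐ[k] A) (pH : X →ₐ[k] H)) x

theorem phiC_mul_psiC (hξ : ξ.toLinearMap = map (pA : X →ₗ[k] A) (pH : X →ₗ[k] H) ∘ₗ comul)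
    (a : A) (h : H) : phiC pA pH ξ a * psiC pA pH ξ h = zetaC pA pH ξ (a ⊗ₜ h) := by
  have hζ : zetaC pA pH ξ ∘ₗ (mapComulAlgHom (pA : X →ₐ[k] A) (pH : X →ₐ[k] H)).toLinearMap
      = (mapComulAlgHom (pH : X →ₐ[k] H) (pA : X →ₐ[k] A)).toLinearMap := by
    rw [toLinearMap_mapComulAlgHom, toLinearMap_mapComulAlgHom]
    exact zetaC_comp_map_comp_comul hξ
  have hζ_mul := map_mul_of_comp_eq_algHom (mapComulAlgHom_surjective hξ) hζ
  simp [phiC, psiC, ← hζ_mul]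

theorem DeltaD_eq_twistedComul
    (hξ : ξ.toLinearMap = map (pA : X →ₗ[k] A) (pH : X →ₗ[k] H) ∘ₗ comul) :
    DeltaD pA pH ξ = twistedComul (zetaC pA pH ξ) := by
  have : LinearMap.mul' k (H ⊗[k] A) ∘ₗ map (phiC pA pH ξ) (psiC pA pH ξ) = zetaC pA pH ξ :=
    TensorProduct.ext' fun a h => by simp [phiC_mul_psiC hξ]
  rw [DeltaD, this]
  rfl

theorem DeltaD_comp_map_comp_comul
    (hξ : ξ.toLinearMap = map (pA : X →ₗ[k] A) (pH : X →ₗ[k] H) ∘ₗ comul) :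
    DeltaD pA pH ξ ∘ₗ map (pA : X →ₗ[k] A) (pH : X →ₗ[k] H) ∘ₗ comul
      = map (map (pA : X →ₗ[k] A) (pH : X →ₗ[k] H) ∘ₗ comul)
          (map (pA : X →ₗ[k] A) (pH : X →ₗ[k] H) ∘ₗ comul) ∘ₗ comul := by
  rw [DeltaD_eq_twistedComul hξ]
  exact twistedComul_comp_map_comp_comul (pA : X →ₗc[k] A) (pH : X →ₗc[k] H)
    (zetaC_comp_map_comp_comul hξ)

end DoubleCross

/-- the double cross coproduct A ⋈^{φ,ψ} H is a bialgebra: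
Δ_D is coassociative, has counit ε_A ⊗ ε_H, and is an algebra morphism. -/
theorem doubleCrossCoproduct_bialgebra (pA : X →ₐc[k] A) (pH : X →ₐc[k] H)
    (ξ : X ≃ₗ[k] A ⊗[k] H)
    (hξ : ∀ x : X, ξ x = TensorProduct.map (pA : X →ₗ[k] A) (pH : X →ₗ[k] H)
      (Coalgebra.comul x)) :
    (TensorProduct.assoc k (A ⊗[k] H) (A ⊗[k] H) (A ⊗[k] H)).toLinearMap ∘ₗ
        TensorProduct.map (DeltaD pA pH ξ) LinearMap.id ∘ₗ DeltaD pA pH ξ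
      = TensorProduct.map LinearMap.id (DeltaD pA pH ξ) ∘ₗ DeltaD pA pH ξ ∧
    (TensorProduct.lid k (A ⊗[k] H)).toLinearMap ∘ₗ
        TensorProduct.map (Coalgebra.counit : A ⊗[k] H →ₗ[k] k) LinearMap.id ∘ₗ
        DeltaD pA pH ξ
      = LinearMap.id ∧
    (TensorProduct.rid k (A ⊗[k] H)).toLinearMap ∘ₗ
        TensorProduct.map LinearMap.id (Coalgebra.counit : A ⊗[k] H →ₗ[k] k) ∘ₗ
        DeltaD pA pH ξ
      = LinearMap.id ∧
    (∀ u v : A ⊗[k] H, DeltaD pA pH ξ (u * v) = DeltaD pA pH ξ u * DeltaD pA pH ξ v) ∧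
    DeltaD pA pH ξ ((1 : A) ⊗ₜ[k] (1 : H))
      = ((1 : A) ⊗ₜ[k] (1 : H)) ⊗ₜ[k] ((1 : A) ⊗ₜ[k] (1 : H)) := by
  have hξ' : ξ.toLinearMap = map (pA : X →ₗ[k] A) (pH : X →ₗ[k] H) ∘ₗ comul := LinearMap.ext hξ
  -- `ρ` is `ξ` as an algebra map
  set ρ := mapComulAlgHom (pA : X →ₐ[k] A) (pH : X →ₐ[k] H)
  have hsurj : Function.Surjective ρ := mapComulAlgHom_surjective hξ'
  have hΔ : DeltaD pA pH ξ ∘ₗ ρ.toLinearMap = map ρ.toLinearMap ρ.toLinearMap ∘ₗ comul := by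
    rw [toLinearMap_mapComulAlgHom]
    exact DeltaD_comp_map_comp_comul hξ'
  have hε : counit ∘ₗ ρ.toLinearMap = counit := by
    rw [toLinearMap_mapComulAlgHom]
    exact counit_comp_map_comp_comul (pA : X →ₗc[k] A) (pH : X →ₗc[k] H)
  have hΔₐ : DeltaD pA pH ξ ∘ₗ ρ.toLinearMap = (mapComulAlgHom ρ ρ).toLinearMap :=
    hΔ.trans (toLinearMap_mapComulAlgHom ρ ρ).symm
  refine ⟨coassoc_of_comp_eq_map_comp_comul hsurj hΔ,
    lid_comp_map_comp_eq_id_of_comp_eq_map_comp_comul hsurj hΔ hε,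
    rid_comp_map_comp_eq_id_of_comp_eq_map_comp_comul hsurj hΔ hε,
    map_mul_of_comp_eq_algHom hsurj hΔₐ, ?_⟩
  rw [← Algebra.TensorProduct.one_def, map_one_of_comp_eq_algHom hΔₐ]
  rfl
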